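/- arXiv:1711.10239 — 3 statements merged into one kernel-verified Lean document; each statement's English description precedes it below -/
import Mathlib

section
/- Q intertwines the lowering operators (Lemma 'lem:QMorphism', second identity, adjoint form): For every l ∈ {0,…,d} and every σ ∈ 𝔅 one has ↑̂*_l(Q σ) = Q(↑*_l σ) in 𝕍, where ↑*_l is the lowering operator on 𝔅-trees and ↑̂*_l the lowering operator on 𝒱-trees defined below. -/
/-
Common framework: multi-indices, the algebra of smooth functions on ℝ^𝒪,
and the spaces of decorated trees 𝒱 and 𝔅 of [Bruned–Chandra–Chevyrev–Hairer,
"Renormalising SPDEs in regularity structures"], presented abstractly together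
with the defining recursions of the various operators on them.
-/

open scoped BigOperators Classical

namespace SPDERenorm

/-! ### Multi-indices in `ℕ^{d+1}` -/

abbrev MIdx (d : ℕ) := Fin (d+1) → ℕ

/-- `k! = ∏ᵢ k[i]!`. -/
def mfact {d : ℕ} (k : MIdx d) : ℕ := ∏ i, Nat.factorial (k i)

/-- `C(k,ℓ) = ∏ᵢ binom(k[i], ℓ[i])`. -/
def mchoose {d : ℕ} (k l : MIdx d) : ℕ := ∏ i, Nat.choose (k i) (l i)

/-- `|k| = Σᵢ k[i]`. -/
def msize {d : ℕ} (k : MIdx d) : ℕ := ∑ i, k i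

/-- The unit multi-index `e_i`. -/
def munit {d : ℕ} (i : Fin (d+1)) : MIdx d := Pi.single i 1

/-- Sum of `f ℓ` over all multi-indices `ℓ ≤ m` (componentwise). -/
noncomputable def msum {d : ℕ} {A : Type*} [AddCommMonoid A] (m : MIdx d) (f : MIdx d → A) : A :=
  ∑ e : (∀ i : Fin (d+1), Fin (m i + 1)), f fun i => (e i : ℕ)

/-- The scaled size `|k|_𝔰 = Σᵢ k[i]·𝔰ᵢ`. -/
noncomputable def wdeg {d : ℕ} (s : Fin (d+1) → ℝ) (k : MIdx d) : ℝ := ∑ i, (k i : ℝ) * s i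

/-- The index set `𝒪 = 𝔏₊ × ℕ^{d+1}`. -/
abbrev Odx (Lp : Type) (d : ℕ) := Lp × MIdx d

/-! ### Functions on `ℝ^𝒪` and differential operators -/

/-- Real-valued functions on `ℝ^𝒪`. -/
abbrev FnO (Lp : Type) (d : ℕ) := (Odx Lp d → ℝ) → ℝ

/-- The coordinate function `𝒳_o`. -/
def Xc {Lp : Type} {d : ℕ} (o : Odx Lp d) : FnO Lp d := fun x => x o

/-- The partial derivative `D_o` in the `o`-th coordinate. -/
noncomputable def Dpart {Lp : Type} {d : ℕ} [DecidableEq Lp] (o : Odx Lp d) (F : FnO Lp d) :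
    FnO Lp d :=
  fun x => deriv (fun t : ℝ => F (Function.update x o t)) (x o)

/-- Iterated partial derivatives `D_{o₁} ∘ ⋯ ∘ D_{oₙ}` over a list. -/
noncomputable def Dlist {Lp : Type} {d : ℕ} [DecidableEq Lp] (L : List (Odx Lp d))
    (F : FnO Lp d) : FnO Lp d :=
  L.foldr Dpart F

/-- The derivation `∂_i F = Σ_{(𝔱,p)} 𝒳_{(𝔱,p+e_i)} · D_{(𝔱,p)} F`. -/
noncomputable def pderivO {Lp : Type} {d : ℕ} [DecidableEq Lp] (i : Fin (d+1)) (F : FnO Lp d) :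
    FnO Lp d :=
  fun x => ∑ᶠ o : Odx Lp d, Xc (o.1, o.2 + munit i) x * Dpart o F x

/-- `∂^k = ∏ᵢ ∂ᵢ^{k[i]}`. -/
noncomputable def mpderiv {Lp : Type} {d : ℕ} [DecidableEq Lp] (k : MIdx d) (F : FnO Lp d) :
    FnO Lp d :=
  (List.finRange (d+1)).foldr (fun i G => (pderivO i)^[k i] G) F

/-- `D^α` for a finitely supported `α ∈ ℕ^𝒪`. -/
noncomputable def Dexp {Lp : Type} {d : ℕ} [DecidableEq Lp] (α : Odx Lp d →₀ ℕ)
    (F : FnO Lp d) : FnO Lp d :=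
  Dlist (Finsupp.toMultiset α).toList F

/-- `α! = ∏_o α[o]!`. -/
def afact {Lp : Type} {d : ℕ} (α : Odx Lp d →₀ ℕ) : ℕ := α.prod fun _ n => Nat.factorial n

/-- The monomial `𝒳^α`. -/
noncomputable def Xpow {Lp : Type} {d : ℕ} (α : Odx Lp d →₀ ℕ) : FnO Lp d :=
  fun x => α.prod fun o n => x o ^ n

/-- `F` depends only on the coordinates in `s`. -/
def DependsOnlyOn {Lp : Type} {d : ℕ} (F : FnO Lp d) (s : Set (Odx Lp d)) : Prop :=
  ∀ x y, (∀ o ∈ s, x o = y o) → F x = F y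

/-- Membership in `𝒞_𝒪`: smooth functions depending on finitely many coordinates. -/
def IsSmoothCO {Lp : Type} {d : ℕ} (F : FnO Lp d) : Prop :=
  ∃ (s : Finset (Odx Lp d)) (g : (↥s → ℝ) → ℝ),
    ContDiff ℝ (⊤ : ℕ∞) g ∧ ∀ x, F x = g fun o => x o.1

/-- Membership in `𝒫 ⊆ 𝒞_𝒪` (relative to the partition `𝒪 = 𝒪₊ ⊔ 𝒪₋`). -/
def IsP {Lp : Type} {d : ℕ} (Om Op : Set (Odx Lp d)) (F : FnO Lp d) : Prop :=
  ∃ (m : ℕ) (α : Fin m → (Odx Lp d →₀ ℕ)) (G : Fin m → FnO Lp d),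
    Function.Injective α ∧
    (∀ j, ∀ o ∈ (α j).support, o ∈ Om) ∧
    (∀ j, IsSmoothCO (G j)) ∧
    (∀ j, G j ≠ 0) ∧
    (∀ j, DependsOnlyOn (G j) Op) ∧
    F = fun x => ∑ j, G j x * Xpow (α j) x

/-- `F` is a real polynomial in finitely many of the coordinate functions. -/
def IsPolyFn {Lp : Type} {d : ℕ} (F : FnO Lp d) : Prop :=
  ∃ (s : Finset (Odx Lp d)) (P : MvPolynomial (↥s) ℝ),
    ∀ x, F x = MvPolynomial.eval (fun o => x o.1) P

/-! ### The trees of `𝒱` -/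

/-- The set `𝒱` of decorated rooted trees, presented abstractly: a tree is uniquely
built from a root decoration `(𝔩,k) ∈ 𝔇 × ℕ^{d+1}` and a multiset of decorated branches,
and every tree arises this way (induction). -/
structure TreeV (Lp Dr : Type) (d : ℕ) where
  V : Type
  node : Dr → MIdx d → Multiset (Odx Lp d × V) → V
  node_bij : Function.Bijective
    (fun x : Dr × MIdx d × Multiset (Odx Lp d × V) => node x.1 x.2.1 x.2.2)
  ind : ∀ P : V → Prop,
    (∀ l k (M : Multiset (Odx Lp d × V)), (∀ x ∈ M, P x.2) → P (node l k M)) → ∀ τ, P τ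

namespace TreeV

variable {Lp Dr : Type} {d : ℕ} (S : TreeV Lp Dr d)

/-- Rebuild a tree after replacing the `j`-th branch by a linear combination of trees. -/
noncomputable def replace (l : Dr) (k : MIdx d) (L : List (Odx Lp d × S.V))
    (j : Fin L.length) (w : S.V →₀ ℝ) : S.V →₀ ℝ :=
  w.sum fun τ' c => Finsupp.single (S.node l k (↑(L.set j ((L.get j).1, τ')))) c

/-- Decomposition of a tree into its root decoration and branches. -/
noncomputable def dec : S.V ≃ Dr × MIdx d × Multiset (Odx Lp d × S.V) :=
  (Equiv.ofBijective _ S.node_bij).symm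

/-- The polynomial decoration at the root. -/
noncomputable def polyOf (τ : S.V) : MIdx d := (S.dec τ).2.1

/-- The multiset of branches at the root. -/
noncomputable def branchesOf (τ : S.V) : Multiset (Odx Lp d × S.V) := (S.dec τ).2.2

/-- The commutative tree product merging the roots of `g 0, …, g (n-1)`
(adding the polynomial decorations), the merged root receiving the driver label `l`. -/
noncomputable def merge (l : Dr) {n : ℕ} (g : Fin n → S.V) : S.V :=
  S.node l (∑ r, S.polyOf (g r)) (∑ r, S.branchesOf (g r))

/-- Defining recursion of the grafting operators `⋖̂_o : 𝕍 ⊗ 𝕍 → 𝕍`. -/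
def GraftSpec [DecidableEq Lp] (graft : Odx Lp d → S.V → S.V → (S.V →₀ ℝ)) : Prop :=
  ∀ (t : Lp) (p : MIdx d) (τ : S.V) (l : Dr) (k : MIdx d) (L : List (Odx Lp d × S.V)),
    graft (t, p) τ (S.node l k ↑L) =
      msum (k ⊓ p) (fun ℓ =>
        (mchoose k ℓ : ℝ) •
          Finsupp.single (S.node l (k - ℓ) (((t, p - ℓ), τ) ::ₘ (↑L : Multiset _))) 1)
      + ∑ j : Fin L.length, S.replace l k L j (graft (t, p) τ (L.get j).2)

/-- Defining recursion of the symmetry factor `S(τ)`. -/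
def SymSpec [DecidableEq Lp] [DecidableEq S.V] (sym : S.V → ℕ) : Prop :=
  ∀ (l : Dr) (k : MIdx d) (M : Multiset (Odx Lp d × S.V)),
    sym (S.node l k M) =
      mfact k * ∏ x ∈ M.toFinset, Nat.factorial (M.count x) * sym x.2 ^ M.count x

/-- Defining recursion of the inner product on `𝕍`. -/
def IPSpec (ip : S.V → S.V → ℝ) : Prop :=
  ∀ (l l' : Dr) (k k' : MIdx d) (L L' : List (Odx Lp d × S.V)),
    ip (S.node l k ↑L) (S.node l' k' ↑L') =
      (if l = l' ∧ k = k' then (mfact k : ℝ) else 0) *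
        ∑ s : Fin L.length ≃ Fin L'.length,
          ∏ j : Fin L.length,
            (if (L.get j).1 = (L'.get (s j)).1 then ip (L.get j).2 (L'.get (s j)).2 else 0)

/-- Defining recursion of `Υ^F`. -/
def UpsSpec [DecidableEq Lp] (F : Lp → Dr → FnO Lp d) (Ups : Lp → S.V → FnO Lp d) : Prop :=
  ∀ (t : Lp) (l : Dr) (k : MIdx d) (L : List (Odx Lp d × S.V)),
    Ups t (S.node l k ↑L) = fun x =>
      (∏ j : Fin L.length, Ups (L.get j).1.1 (L.get j).2 x) *
        mpderiv k (Dlist (L.map Prod.fst) (F t l)) x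

/-- Defining recursion of the raising operator `↑̂_i` on `𝕍`. -/
def RaiseSpec (raise : Fin (d+1) → S.V → (S.V →₀ ℝ)) : Prop :=
  ∀ (i : Fin (d+1)) (l : Dr) (k : MIdx d) (L : List (Odx Lp d × S.V)),
    raise i (S.node l k ↑L) =
      Finsupp.single (S.node l (k + munit i) ↑L) 1
      + ∑ j : Fin L.length, S.replace l k L j (raise i (L.get j).2)

/-- Defining recursion of the cutting operator `⋖̂*_o : 𝕍 → 𝕍 ⊗ 𝕍` (elements of
`𝕍 ⊗ 𝕍` represented as finitely supported functions on pairs of trees, a pair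
`(branch, trunk)` recording a cut). -/
def CutSpec [DecidableEq Lp] (cut : Odx Lp d → S.V → (S.V × S.V →₀ ℝ)) : Prop :=
  ∀ (t : Lp) (p : MIdx d) (l : Dr) (k : MIdx d) (L : List (Odx Lp d × S.V)),
    cut (t, p) (S.node l k ↑L) =
      (∑ j : Fin L.length,
        if (L.get j).1.1 = t ∧ (L.get j).1.2 ≤ p then
          ((mfact (p - (L.get j).1.2) : ℝ))⁻¹ •
            Finsupp.single ((L.get j).2,
              S.node l (k + (p - (L.get j).1.2)) ↑(L.eraseIdx j)) 1
        else 0)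
      + ∑ j : Fin L.length,
          (cut (t, p) (L.get j).2).sum fun ab c =>
            Finsupp.single (ab.1, S.node l k ↑(L.set j ((L.get j).1, ab.2))) c

/-- Defining recursion of the lowering operator `↑̂*_i` on `𝕍`. -/
def LowSpec (low : Fin (d+1) → S.V → (S.V →₀ ℝ)) : Prop :=
  ∀ (i : Fin (d+1)) (l : Dr) (k : MIdx d) (L : List (Odx Lp d × S.V)),
    low i (S.node l k ↑L) =
      (k i : ℝ) • Finsupp.single (S.node l (k - munit i) ↑L) 1
      + ∑ j : Fin L.length, S.replace l k L j (low i (L.get j).2)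

/-- Defining recursion of the predicate "`τ` is `𝔱`-non-vanishing for `F`". -/
def NVSpec [DecidableEq Lp] (F : Lp → Dr → FnO Lp d) (NV : Lp → S.V → Prop) : Prop :=
  ∀ (t : Lp) (l : Dr) (k : MIdx d) (L : List (Odx Lp d × S.V)),
    NV t (S.node l k ↑L) ↔
      (mpderiv k (Dlist (L.map Prod.fst) (F t l)) ≠ 0 ∧
        ∀ j : Fin L.length, NV (L.get j).1.1 (L.get j).2)

/-- The coefficient series of `U_o − u_o·𝟏`, for the jet `U` with Taylor coefficients `u`
and planted-tree coefficients `c_𝔱(τ)/S(τ)`. -/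
noncomputable def uSeries (z : Dr) (u : Odx Lp d → ℝ) (c : Lp → S.V → ℝ) (sym : S.V → ℕ)
    (o : Odx Lp d) (σ : S.V) : ℝ :=
  (∑ᶠ q : MIdx d, if q ≠ 0 ∧ σ = S.node z q 0 then u (o.1, o.2 + q) / (mfact q : ℝ) else 0) +
  ∑ᶠ τ : S.V, if σ = S.node z 0 {(o, τ)} then c o.1 τ / (sym τ : ℝ) else 0

/-- The coefficient series of the product `(U − u·𝟏)^α · Ξ_l`, expanded by multilinearity
using the commutative tree product merging the roots. -/
noncomputable def powCoef (coef : Odx Lp d → S.V → ℝ) (l : Dr) (α : Odx Lp d →₀ ℕ)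
    (σ : S.V) : ℝ :=
  ∑ᶠ g : Fin (Finsupp.toMultiset α).toList.length → S.V,
    (∏ r, coef ((Finsupp.toMultiset α).toList.get r) (g r)) *
      (if σ = S.merge l g then 1 else 0)

/-- The coefficient series of `Σ_{𝔩∈𝔇} F^𝔩_𝔱(U)·Ξ_𝔩`, where
`F^𝔩_𝔱(U)·Ξ_𝔩 = Σ_α (D^α F^𝔩_𝔱(u)/α!)·(U − u·𝟏)^α·Ξ_𝔩`. -/
noncomputable def lhsCoef [DecidableEq Lp] (F : Lp → Dr → FnO Lp d) (u : Odx Lp d → ℝ)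
    (coef : Odx Lp d → S.V → ℝ) (t : Lp) (σ : S.V) : ℝ :=
  ∑ᶠ l : Dr, ∑ᶠ α : Odx Lp d →₀ ℕ,
    Dexp α (F t l) u / (afact α : ℝ) * S.powCoef coef l α σ

/-- Defining recursion of the 𝔰-degree `|·|_𝔰` of decorated trees (with driver labels in
`𝔏₋ ⊔ {𝟎}`, encoded as `Option Lm` with `none = 𝟎`). -/
def DegSpec {Lm : Type} (S : TreeV Lp (Option Lm) d) (s : Fin (d+1) → ℝ)
    (degL : Lp → ℝ) (degLm : Lm → ℝ) (deg : S.V → ℝ) : Prop :=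
  ∀ (l : Option Lm) (k : MIdx d) (M : Multiset (Odx Lp d × S.V)),
    deg (S.node l k M) =
      l.elim 0 degLm + wdeg s k +
        ((M.map fun x => (degL x.1.1 - wdeg s x.1.2) + deg x.2).sum)

end TreeV

/-! ### The trees of `𝔅` -/

/-- Polynomial node-decoration factors `𝓘_{(𝔱,p)}[X^k]` with `p ≤ k` and `p ≠ k`;
an element is a pair `((𝔱,p), k)` subject to these constraints. -/
abbrev PolyDec (Lp : Type) (d : ℕ) :=
  {x : Odx Lp d × MIdx d // x.1.2 ≤ x.2 ∧ x.1.2 ≠ x.2}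

/-- Raise the polynomial exponent of a `PolyDec` by `e_i`. -/
def PolyDec.bump {Lp : Type} {d : ℕ} (pd : PolyDec Lp d) (i : Fin (d+1)) : PolyDec Lp d :=
  ⟨(pd.1.1, pd.1.2 + munit i), by
    constructor
    · exact fun j => le_trans (pd.2.1 j) (Nat.le_add_right _ _)
    · intro h
      have hi : pd.1.1.2 i ≤ pd.1.2 i := pd.2.1 i
      have h' : pd.1.1.2 i = pd.1.2 i + munit i i := congrFun h i
      simp only [munit, Pi.single_eq_same] at h'
      omega⟩

/-- The fresh polynomial decoration `𝓘_{(𝔱,p)}[X^{p+e_i}]`. -/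
def freshPD {Lp : Type} {d : ℕ} (o : Odx Lp d) (i : Fin (d+1)) : PolyDec Lp d :=
  ⟨(o, o.2 + munit i), by
    constructor
    · exact fun j => Nat.le_add_right _ _
    · intro h
      have h' : o.2 i = o.2 i + munit i i := congrFun h i
      simp only [munit, Pi.single_eq_same] at h'
      omega⟩

/-- Lower the polynomial exponent of a `PolyDec` by `e_i`. -/
def PolyDec.lower {Lp : Type} {d : ℕ} (pd : PolyDec Lp d) (i : Fin (d+1))
    (h : pd.1.1.2 + munit i ≤ pd.1.2) (hne : ¬ pd.1.2 - munit i = pd.1.1.2) : PolyDec Lp d :=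
  ⟨(pd.1.1, pd.1.2 - munit i), by
    constructor
    · intro j
      have hj := h j
      simp only [Pi.add_apply, Pi.sub_apply] at hj ⊢
      omega
    · exact fun hh => hne hh.symm⟩

/-- The set `𝔅` of decorated rooted trees with polynomial node decorations, presented
abstractly. -/
structure TreeB (Lp Dr : Type) (d : ℕ) where
  B : Type
  node : Dr → Multiset (PolyDec Lp d) → Multiset (Odx Lp d × B) → B
  node_bij : Function.Bijective
    (fun x : Dr × Multiset (PolyDec Lp d) × Multiset (Odx Lp d × B) => node x.1 x.2.1 x.2.2)
  ind : ∀ P : B → Prop,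
    (∀ l N (M : Multiset (Odx Lp d × B)), (∀ x ∈ M, P x.2) → P (node l N M)) → ∀ σ, P σ

namespace TreeB

variable {Lp Dr : Type} {d : ℕ} (S : TreeB Lp Dr d)

/-- Rebuild a tree after replacing the `j`-th branch by a linear combination of trees. -/
noncomputable def replace (l : Dr) (N : List (PolyDec Lp d)) (L : List (Odx Lp d × S.B))
    (j : Fin L.length) (w : S.B →₀ ℝ) : S.B →₀ ℝ :=
  w.sum fun σ' c => Finsupp.single (S.node l ↑N (↑(L.set j ((L.get j).1, σ')))) c

/-- Defining recursion of `Υ̊^F`. -/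
def UpsSpec [DecidableEq Lp] (F : Lp → Dr → FnO Lp d) (Ups : Lp → S.B → FnO Lp d) : Prop :=
  ∀ (t : Lp) (l : Dr) (N : List (PolyDec Lp d)) (L : List (Odx Lp d × S.B)),
    Ups t (S.node l ↑N ↑L) = fun x =>
      (∏ i : Fin N.length, x ((N.get i).1.1.1, (N.get i).1.2)) *
      (∏ j : Fin L.length, Ups (L.get j).1.1 (L.get j).2 x) *
      Dlist (N.map (fun pd => pd.1.1) ++ L.map Prod.fst) (F t l) x

/-- Defining recursion of the grafting operators `⋖_o` on `𝔅`. -/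
def GraftSpec (graft : Odx Lp d → S.B → S.B → (S.B →₀ ℝ)) : Prop :=
  ∀ (o : Odx Lp d) (σ' : S.B) (l : Dr) (N : List (PolyDec Lp d)) (L : List (Odx Lp d × S.B)),
    graft o σ' (S.node l ↑N ↑L) =
      Finsupp.single (S.node l ↑N ((o, σ') ::ₘ (↑L : Multiset _))) 1
      + (∑ j : Fin L.length, S.replace l N L j (graft o σ' (L.get j).2))
      + ∑ i : Fin N.length,
          (if o = ((N.get i).1.1.1, (N.get i).1.2) then
            Finsupp.single
              (S.node l ↑(N.eraseIdx i) (((N.get i).1.1, σ') ::ₘ (↑L : Multiset _))) 1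
          else 0)

/-- Defining recursion of the inner product on `𝔹`. -/
def IPSpec (ip : S.B → S.B → ℝ) : Prop :=
  ∀ (l l' : Dr) (N N' : List (PolyDec Lp d)) (L L' : List (Odx Lp d × S.B)),
    ip (S.node l ↑N ↑L) (S.node l' ↑N' ↑L') =
      (if l = l' then 1 else 0) *
      (∑ s : Fin N.length ≃ Fin N'.length,
        ∏ i : Fin N.length,
          (if (N.get i).1 = (N'.get (s i)).1 then
            (mfact ((N.get i).1.2 - (N.get i).1.1.2) : ℝ)
          else 0)) *
      ∑ s : Fin L.length ≃ Fin L'.length,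
        ∏ j : Fin L.length,
          (if (L.get j).1 = (L'.get (s j)).1 then ip (L.get j).2 (L'.get (s j)).2 else 0)

/-- Defining recursion of the raising operator `↑_i` on `𝔅`, producing a formal series
(represented by its coefficient function `𝔅 → ℝ`). -/
def RaiseSpec (raise : Fin (d+1) → S.B → (S.B → ℝ)) : Prop :=
  ∀ (i : Fin (d+1)) (l : Dr) (N : List (PolyDec Lp d)) (L : List (Odx Lp d × S.B)),
    raise i (S.node l ↑N ↑L) = fun σ'' =>
      (∑ ib : Fin N.length,
        (if σ'' = S.node l ↑(N.set ib ((N.get ib).bump i)) ↑L then 1 else 0))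
      + (if ∃ o : Odx Lp d, σ'' = S.node l (freshPD o i ::ₘ (↑N : Multiset _)) ↑L then 1 else 0)
      + ∑ j : Fin L.length,
          ∑ᶠ σ' : S.B,
            raise i (L.get j).2 σ' *
              (if σ'' = S.node l ↑N ↑(L.set j ((L.get j).1, σ')) then 1 else 0)

/-- Defining recursion of the lowering operator `↑*_i` on `𝔅`. -/
def LowSpec (low : Fin (d+1) → S.B → (S.B →₀ ℝ)) : Prop :=
  ∀ (i : Fin (d+1)) (l : Dr) (N : List (PolyDec Lp d)) (L : List (Odx Lp d × S.B)),
    low i (S.node l ↑N ↑L) =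
      (∑ ib : Fin N.length,
        (if h : (N.get ib).1.1.2 + munit i ≤ (N.get ib).1.2 then
          (((N.get ib).1.2 i - (N.get ib).1.1.2 i : ℕ) : ℝ) •
            (if he : (N.get ib).1.2 - munit i = (N.get ib).1.1.2 then
              Finsupp.single (S.node l ↑(N.eraseIdx ib) ↑L) 1
            else
              Finsupp.single (S.node l ↑(N.set ib ((N.get ib).lower i h he)) ↑L) 1)
        else 0))
      + ∑ j : Fin L.length, S.replace l N L j (low i (L.get j).2)

/-- Defining recursion of the cutting operator `⋖*_o : 𝔹 → 𝔹 ⊗ 𝔹` (elements of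
`𝔹 ⊗ 𝔹` represented as finitely supported functions on pairs of trees, a pair
`(branch, trunk)` recording a cut). -/
def CutSpec (cut : Odx Lp d → S.B → (S.B × S.B →₀ ℝ)) : Prop :=
  ∀ (t : Lp) (p : MIdx d) (l : Dr) (N : List (PolyDec Lp d)) (L : List (Odx Lp d × S.B)),
    cut (t, p) (S.node l ↑N ↑L) =
      (∑ j : Fin L.length,
        (if hc : (L.get j).1.1 = t ∧ (L.get j).1.2 ≤ p then
          ((mfact (p - (L.get j).1.2) : ℝ))⁻¹ •
            Finsupp.single ((L.get j).2,
              S.node l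
                (if he : (L.get j).1.2 = p then (↑N : Multiset (PolyDec Lp d))
                 else (⟨((L.get j).1, p), hc.2, he⟩ ::ₘ (↑N : Multiset (PolyDec Lp d))))
                ↑(L.eraseIdx j)) 1
        else 0))
      + ∑ j : Fin L.length,
          (cut (t, p) (L.get j).2).sum fun ab c =>
            Finsupp.single (ab.1, S.node l ↑N ↑(L.set j ((L.get j).1, ab.2))) c

end TreeB

/-- Defining recursion of the map `Q : 𝔹 → 𝕍` collapsing polynomial decorations. -/
def QSpec {Lp Dr : Type} {d : ℕ} (SB : TreeB Lp Dr d) (SV : TreeV Lp Dr d)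
    (Qf : SB.B → SV.V) : Prop :=
  ∀ (l : Dr) (N : Multiset (PolyDec Lp d)) (M : Multiset (Odx Lp d × SB.B)),
    Qf (SB.node l N M) =
      SV.node l ((N.map fun pd => pd.1.2 - pd.1.1.2).sum) (M.map fun x => (x.1, Qf x.2))

/-- The generic summand of the multivariate Faà di Bruno formula, indexed by `(r, q⃗, m⃗)`;
it vanishes unless `(q⃗, m⃗) ∈ I(r,k)`. -/
noncomputable def fdbSummand {Lp : Type} {d : ℕ} [DecidableEq Lp] (lo : LinearOrder (MIdx d))
    (F : FnO Lp d) (k : MIdx d)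
    (p : Σ r : ℕ, (Fin r → MIdx d) × (Fin r → (Odx Lp d →₀ ℕ))) : FnO Lp d :=
  if (∀ j, p.2.2 j ≠ 0) ∧ (∀ j j' : Fin p.1, j < j' → lo.lt (p.2.1 j) (p.2.1 j')) ∧
      (∀ j, lo.lt 0 (p.2.1 j)) ∧ (∑ j, ((p.2.2 j).sum fun _ n => n) • p.2.1 j) = k then
    fun x =>
      (∏ j, (p.2.2 j).prod fun o n =>
        (x (o.1, o.2 + p.2.1 j) / (mfact (p.2.1 j) : ℝ)) ^ n / (Nat.factorial n : ℝ)) *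
        Dexp (∑ j, p.2.2 j) F x
  else 0

/-! ### Generic decorated trees -/

/-- Decorated rooted trees over node species `N` and edge species `E`,
presented abstractly. -/
structure GTree (N E : Type) where
  T : Type
  node : N → Multiset (E × T) → T
  node_bij : Function.Bijective (fun x : N × Multiset (E × T) => node x.1 x.2)
  ind : ∀ P : T → Prop, (∀ Y M, (∀ x ∈ M, P x.2) → P (node Y M)) → ∀ τ, P τ

namespace GTree

/-- Multilinear expansion of a list of edge-decorated linear combinations of trees into a
linear combination of branch multisets. -/
noncomputable def expandAux {N E : Type} (S : GTree N E) :
    List (E × (S.T →₀ ℝ)) → (Multiset (E × S.T) →₀ ℝ)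
  | [] => Finsupp.single 0 1
  | (e, w) :: L =>
      w.sum fun τ' c => (S.expandAux L).sum fun M c' => Finsupp.single ((e, τ') ::ₘ M) (c * c')

/-- Defining recursion of the functorial extension `𝔗(A)` of a linear map `A` between
the free vector spaces on the node species. -/
def MapSpec {N N' E : Type} (S : GTree N E) (S' : GTree N' E)
    (A : N → (N' →₀ ℝ)) (TA : S.T → (S'.T →₀ ℝ)) : Prop :=
  ∀ (Y : N) (L : List (E × S.T)),
    TA (S.node Y ↑L) =
      (A Y).sum fun Y' c =>
        (S'.expandAux (L.map fun x => (x.1, TA x.2))).sum fun M c' =>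
          Finsupp.single (S'.node Y' M) (c * c')

/-- Defining recursion of the inner product on `𝔗(𝖭,𝖤)` induced by an inner product on
the node species. -/
def IPSpec {N E : Type} (S : GTree N E) (ipN : N → N → ℝ) (ip : S.T → S.T → ℝ) : Prop :=
  ∀ (Y Y' : N) (L L' : List (E × S.T)),
    ip (S.node Y ↑L) (S.node Y' ↑L') =
      ipN Y Y' * ∑ s : Fin L.length ≃ Fin L'.length,
        ∏ j : Fin L.length,
          (if (L.get j).1 = (L'.get (s j)).1 then ip (L.get j).2 (L'.get (s j)).2 else 0)

end GTree

end SPDERenorm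

/-!
Induction on the tree. `Q` sends a root with factors `𝓘_{(𝔱_ī,p_ī)}[X^{k_ī}]` to a root with
polynomial decoration `K = Σ_ī (k_ī - p_ī)`. Lowering the factor `ī` carries the coefficient
`(k_ī - p_ī)[l]` and, after `Q`, always yields the root decoration `K - e_l`, whether the factor
survives or disappears (when `k_ī - e_l = p_ī`); so the root terms of `↑*_l σ` sum to
`K[l] · (Qσ with K lowered by e_l)`, the root term of `↑̂*_l(Qσ)`. The branch terms agree by
induction.
-/

section ListSum

variable {α M : Type*} [AddCommMonoid M] [PartialOrder M] [Sub M] [OrderedSub M]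
  [AddLeftReflectLE M]

lemma List.sum_map_eraseIdx_eq_tsub (f : α → M) (l : List α) {n : ℕ} (hn : n < l.length)
    {m : M} (hm : f l[n] = m) :
    ((l.eraseIdx n).map f).sum = (l.map f).sum - m := by
  rw [← ((List.getElem_cons_eraseIdx_perm hn).map f).sum_eq, List.map_cons, List.sum_cons, hm,
    add_tsub_cancel_left]

lemma List.sum_map_set_eq_tsub [CanonicallyOrderedAdd M] (f : α → M) (l : List α) {n : ℕ}
    (hn : n < l.length) (a : α) {m : M} (hm : m ≤ f l[n]) (ha : f a = f l[n] - m) :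
    ((l.set n a).map f).sum = (l.map f).sum - m := by
  rw [((List.set_perm_cons_eraseIdx hn a).map f).sum_eq,
    ← ((List.getElem_cons_eraseIdx_perm hn).map f).sum_eq, List.map_cons, List.sum_cons,
    List.map_cons, List.sum_cons, ha, tsub_add_eq_add_tsub hm]

end ListSum

namespace SPDERenorm

variable {Lp Dr : Type} {d : ℕ}

lemma munit_le_iff_pos {i : Fin (d+1)} {k : MIdx d} : munit i ≤ k ↔ 0 < k i := by
  refine ⟨fun h => by simpa [munit, Nat.one_le_iff_ne_zero, Nat.pos_iff_ne_zero] using h i,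
    fun h j => ?_⟩
  rcases eq_or_ne j i with rfl | hj
  · simpa [munit, Nat.one_le_iff_ne_zero, Nat.pos_iff_ne_zero] using h
  · simp [munit, Pi.single_eq_of_ne hj]

/-- The exponent `k - p` that `Q` substitutes for the factor `𝓘_{(𝔱,p)}[X^k]`. -/
def PolyDec.excess (pd : PolyDec Lp d) : MIdx d := pd.1.2 - pd.1.1.2

namespace PolyDec

variable (pd : PolyDec Lp d) (i : Fin (d+1))

lemma munit_le_excess_iff : munit i ≤ pd.excess ↔ pd.1.1.2 + munit i ≤ pd.1.2 :=
  le_tsub_iff_left pd.2.1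

lemma excess_apply_eq_zero (h : ¬ pd.1.1.2 + munit i ≤ pd.1.2) : pd.excess i = 0 := by
  rwa [← munit_le_excess_iff, munit_le_iff_pos, Nat.pos_iff_ne_zero, not_not] at h

lemma excess_eq_munit (h : pd.1.1.2 + munit i ≤ pd.1.2) (he : pd.1.2 - munit i = pd.1.1.2) :
    pd.excess = munit i := by
  rw [excess, ← he, tsub_tsub_cancel_of_le (le_of_add_le_right h)]

lemma excess_lower (h : pd.1.1.2 + munit i ≤ pd.1.2) (he : ¬ pd.1.2 - munit i = pd.1.1.2) :
    (pd.lower i h he).excess = pd.excess - munit i :=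
  tsub_right_comm

end PolyDec

namespace QSpec

variable {SB : TreeB Lp Dr d} {SV : TreeV Lp Dr d} {Qf : SB.B → SV.V}

lemma node_coe (hQ : QSpec SB SV Qf) (l : Dr) (N : List (PolyDec Lp d))
    (L : List (Odx Lp d × SB.B)) :
    Qf (SB.node l ↑N ↑L) =
      SV.node l (N.map PolyDec.excess).sum ↑(L.map fun x => (x.1, Qf x.2)) := by
  rw [hQ, Multiset.map_coe, Multiset.map_coe, Multiset.sum_coe]
  rfl

lemma mapDomain_replace (hQ : QSpec SB SV Qf) (l : Dr) (N : List (PolyDec Lp d))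
    (L : List (Odx Lp d × SB.B)) (j : Fin L.length) (w : SB.B →₀ ℝ) :
    Finsupp.mapDomain Qf (SB.replace l N L j w) =
      SV.replace l (N.map PolyDec.excess).sum (L.map fun x => (x.1, Qf x.2))
        (j.cast (L.length_map _).symm) (Finsupp.mapDomain Qf w) := by
  rw [TreeB.replace, TreeV.replace, Finsupp.mapDomain_sum,
    Finsupp.sum_mapDomain_index (fun _ => Finsupp.single_zero _)
      (fun _ _ _ => Finsupp.single_add _ _ _)]
  refine Finsupp.sum_congr fun σ' _ => ?_
  rw [Finsupp.mapDomain_single, hQ.node_coe, List.map_set]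
  simp

lemma mapDomain_lowerFactor (hQ : QSpec SB SV Qf) (i : Fin (d+1)) (l : Dr)
    (N : List (PolyDec Lp d)) (L : List (Odx Lp d × SB.B)) (ib : Fin N.length) :
    Finsupp.mapDomain Qf
      (if h : (N.get ib).1.1.2 + munit i ≤ (N.get ib).1.2 then
        (((N.get ib).1.2 i - (N.get ib).1.1.2 i : ℕ) : ℝ) •
          (if he : (N.get ib).1.2 - munit i = (N.get ib).1.1.2 then
            Finsupp.single (SB.node l ↑(N.eraseIdx ib) ↑L) (1 : ℝ)
          else
            Finsupp.single (SB.node l ↑(N.set ib ((N.get ib).lower i h he)) ↑L) (1 : ℝ))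
      else 0) =
      ((N.get ib).excess i : ℝ) •
        Finsupp.single (SV.node l ((N.map PolyDec.excess).sum - munit i)
          ↑(L.map fun x => (x.1, Qf x.2))) (1 : ℝ) := by
  split_ifs with h he
  · rw [Finsupp.mapDomain_smul, Finsupp.mapDomain_single, hQ.node_coe,
      List.sum_map_eraseIdx_eq_tsub _ _ ib.isLt ((N.get ib).excess_eq_munit i h he)]
    rfl
  · rw [Finsupp.mapDomain_smul, Finsupp.mapDomain_single, hQ.node_coe,
      List.sum_map_set_eq_tsub _ _ ib.isLt _ (((N.get ib).munit_le_excess_iff i).2 h)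
        ((N.get ib).excess_lower i h he)]
    rfl
  · rw [Finsupp.mapDomain_zero, (N.get ib).excess_apply_eq_zero i h, Nat.cast_zero, zero_smul]

end QSpec

theorem statement7_general
    {d : ℕ} {Lp Dr : Type}
    (SB : TreeB Lp Dr d) (SV : TreeV Lp Dr d)
    (Qf : SB.B → SV.V) (hQ : QSpec SB SV Qf)
    (lowB : Fin (d+1) → SB.B → (SB.B →₀ ℝ)) (hlowB : SB.LowSpec lowB)
    (lowV : Fin (d+1) → SV.V → (SV.V →₀ ℝ)) (hlowV : SV.LowSpec lowV) :
    ∀ (i : Fin (d+1)) (σ : SB.B),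
      lowV i (Qf σ) = Finsupp.mapDomain Qf (lowB i σ) := by
  intro i σ
  induction σ using SB.ind with
  | _ l N M ih =>
    obtain ⟨N, rfl⟩ : ∃ N' : List (PolyDec Lp d), N = ↑N' := ⟨N.toList, N.coe_toList.symm⟩
    obtain ⟨L, rfl⟩ : ∃ L' : List (Odx Lp d × SB.B), M = ↑L' := ⟨M.toList, M.coe_toList.symm⟩
    rw [hQ.node_coe, hlowV, hlowB, Finsupp.mapDomain_add, Finsupp.mapDomain_finsetSum,
      Finsupp.mapDomain_finsetSum]
    congr 1
    · rw [Finset.sum_congr rfl fun ib _ => hQ.mapDomain_lowerFactor i l N L ib,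
        ← Finset.sum_smul, ← Nat.cast_sum, ← Finset.sum_apply]
      simp only [List.get_eq_getElem, Fin.sum_univ_fun_getElem]
    · refine (Fintype.sum_equiv (finCongr (L.length_map _).symm) _ _ fun j => ?_).symm
      rw [hQ.mapDomain_replace, ← ih _ (List.get_mem L j)]
      simp

/-- Lemma `lem:QMorphism`, second identity, adjoint form: `Q` intertwines
the lowering operators: `↑̂*_l(Qσ) = Q(↑*_l σ)` in `𝕍`. -/
theorem statement7
    {d : ℕ} {Lp Dr : Type} [Fintype Lp] [DecidableEq Lp]
    (SB : TreeB Lp Dr d) (SV : TreeV Lp Dr d)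
    (Qf : SB.B → SV.V) (hQ : QSpec SB SV Qf)
    (lowB : Fin (d+1) → SB.B → (SB.B →₀ ℝ)) (hlowB : SB.LowSpec lowB)
    (lowV : Fin (d+1) → SV.V → (SV.V →₀ ℝ)) (hlowV : SV.LowSpec lowV) :
    ∀ (i : Fin (d+1)) (σ : SB.B),
      lowV i (Qf σ) = Finsupp.mapDomain Qf (lowB i σ) :=
  statement7_general SB SV Qf hQ lowB hlowB lowV hlowV

end SPDERenorm
end

section
/- Raising morphism property of Υ (Corollary 'cor:graftMorphismSmall', second identity): For every family F = (F^𝔩_𝔱)_{𝔱∈𝔏₊,𝔩∈𝔇} with every F^𝔩_𝔱 ∈ 𝒫, every i ∈ {0,…,d}, and every τ ∈ 𝒱, one has ∂_i Υ^F[τ] = Υ^F[↑̂_i τ], where ∂_i acts componentwise on 𝒫^{𝔏₊} and Υ^F is extended linearly to 𝕍. -/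
/-
Common framework: multi-indices, the algebra of smooth functions on ℝ^𝒪,
and the spaces of decorated trees 𝒱 and 𝔅 of [Bruned–Chandra–Chevyrev–Hairer,
"Renormalising SPDEs in regularity structures"], presented abstractly together
with the defining recursions of the various operators on them.
-/

open scoped BigOperators Classical

namespace SPDERenorm

/-!
On functions that depend smoothly on finitely many coordinates, each `∂_i` is a derivation, and
any two of them commute by the symmetry of second derivatives, so that `∂_i ∂^k = ∂^{k+e_i}`.
Every `Υ^F[τ]` is such a function, because every `F^𝔩_𝔱 ∈ 𝒫` is. Since
`Υ^F_𝔱[Ξ_𝔩 X^k ∏ⱼ 𝓘_{oⱼ}(τⱼ)]` is the product of the `Υ^F[τⱼ]` with `∂^k D_{o₁} ⋯ D_{oₙ} F^𝔩_𝔱`,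
the Leibniz rule splits `∂_i Υ^F[τ]` into the term where `∂_i` raises `k` to `k + e_i`, which is
`Υ^F` of `τ` raised at the root, and the terms where `∂_i` falls on some `Υ^F[τⱼ]`, which by
induction on `τ` give `Υ^F` of `τ` raised at the nodes of the branch `τⱼ`.
-/

open Finset

section SmoothFunctions

variable {Lp : Type} {d : ℕ}

def IsSmoothCOOn (s : Finset (Odx Lp d)) (F : FnO Lp d) : Prop :=
  ∃ g : (↥s → ℝ) → ℝ, ContDiff ℝ (⊤ : ℕ∞) g ∧ ∀ x, F x = g fun o => x o.1

variable {s t : Finset (Odx Lp d)} {F G : FnO Lp d}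

lemma isSmoothCO_iff : IsSmoothCO F ↔ ∃ s, IsSmoothCOOn s F := Iff.rfl

lemma IsSmoothCOOn.isSmoothCO (h : IsSmoothCOOn s F) : IsSmoothCO F := ⟨s, h⟩

lemma IsSmoothCOOn.mono (h : IsSmoothCOOn s F) (hst : s ⊆ t) : IsSmoothCOOn t F := by
  obtain ⟨g, hg, hFg⟩ := h
  exact ⟨fun y => g fun o => y (Set.inclusion hst o),
    hg.comp (contDiff_pi.2 fun o => contDiff_apply ℝ ℝ _), hFg⟩

lemma IsSmoothCO.exists_isSmoothCOOn (hF : IsSmoothCO F) (hG : IsSmoothCO G) :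
    ∃ s, IsSmoothCOOn s F ∧ IsSmoothCOOn s G := by
  obtain ⟨s, hs⟩ := isSmoothCO_iff.1 hF
  obtain ⟨t, ht⟩ := isSmoothCO_iff.1 hG
  exact ⟨s ∪ t, hs.mono subset_union_left, ht.mono subset_union_right⟩

lemma isSmoothCOOn_const (s : Finset (Odx Lp d)) (c : ℝ) : IsSmoothCOOn s fun _ => c :=
  ⟨fun _ => c, contDiff_const, fun _ => rfl⟩

lemma isSmoothCOOn_coord (o : Odx Lp d) : IsSmoothCOOn {o} fun x => x o :=
  ⟨fun y => y ⟨o, mem_singleton_self o⟩, contDiff_apply ℝ ℝ _, fun _ => rfl⟩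

lemma IsSmoothCOOn.add (hF : IsSmoothCOOn s F) (hG : IsSmoothCOOn s G) :
    IsSmoothCOOn s fun x => F x + G x := by
  obtain ⟨f, hf, hFf⟩ := hF
  obtain ⟨g, hg, hGg⟩ := hG
  exact ⟨fun y => f y + g y, hf.add hg, fun x => congrArg₂ (· + ·) (hFf x) (hGg x)⟩

lemma IsSmoothCOOn.mul (hF : IsSmoothCOOn s F) (hG : IsSmoothCOOn s G) :
    IsSmoothCOOn s fun x => F x * G x := by
  obtain ⟨f, hf, hFf⟩ := hF
  obtain ⟨g, hg, hGg⟩ := hG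
  exact ⟨fun y => f y * g y, hf.mul hg, fun x => congrArg₂ (· * ·) (hFf x) (hGg x)⟩

lemma isSmoothCO_const (c : ℝ) : IsSmoothCO fun _ : Odx Lp d → ℝ => c :=
  (isSmoothCOOn_const ∅ c).isSmoothCO

lemma isSmoothCO_coord (o : Odx Lp d) : IsSmoothCO fun x : Odx Lp d → ℝ => x o :=
  (isSmoothCOOn_coord o).isSmoothCO

lemma IsSmoothCO.add (hF : IsSmoothCO F) (hG : IsSmoothCO G) : IsSmoothCO fun x => F x + G x := by
  obtain ⟨s, hFs, hGs⟩ := hF.exists_isSmoothCOOn hG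
  exact (hFs.add hGs).isSmoothCO

lemma IsSmoothCO.mul (hF : IsSmoothCO F) (hG : IsSmoothCO G) : IsSmoothCO fun x => F x * G x := by
  obtain ⟨s, hFs, hGs⟩ := hF.exists_isSmoothCOOn hG
  exact (hFs.mul hGs).isSmoothCO

lemma IsSmoothCO.pow (hF : IsSmoothCO F) (n : ℕ) : IsSmoothCO fun x => F x ^ n := by
  induction n with
  | zero => simpa using isSmoothCO_const 1
  | succ n ih => simpa only [pow_succ] using ih.mul hF

lemma isSmoothCO_sum {ι : Type*} (u : Finset ι) {f : ι → FnO Lp d}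
    (h : ∀ j ∈ u, IsSmoothCO (f j)) : IsSmoothCO fun x => ∑ j ∈ u, f j x := by
  induction u using Finset.induction_on with
  | empty => simpa using isSmoothCO_const 0
  | insert a u ha ih =>
    simp only [sum_insert ha]
    exact (h a (mem_insert_self a u)).add (ih fun j hj => h j (mem_insert_of_mem hj))

lemma isSmoothCO_prod {ι : Type*} (u : Finset ι) {f : ι → FnO Lp d}
    (h : ∀ j ∈ u, IsSmoothCO (f j)) : IsSmoothCO fun x => ∏ j ∈ u, f j x := by
  induction u using Finset.induction_on with
  | empty => simpa using isSmoothCO_const 1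
  | insert a u ha ih =>
    simp only [prod_insert ha]
    exact (h a (mem_insert_self a u)).mul (ih fun j hj => h j (mem_insert_of_mem hj))

lemma isSmoothCO_Xpow (α : Odx Lp d →₀ ℕ) : IsSmoothCO (Xpow α) :=
  isSmoothCO_prod α.support fun o _ => (isSmoothCO_coord o).pow (α o)

lemma IsP.isSmoothCO {Om Op : Set (Odx Lp d)} (h : IsP Om Op F) : IsSmoothCO F := by
  obtain ⟨m, α, G, -, -, hG, -, -, rfl⟩ := h
  exact isSmoothCO_sum _ fun j _ => (hG j).mul (isSmoothCO_Xpow (α j))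

end SmoothFunctions

lemma fderiv_fderiv_apply_comm {E : Type*} [NormedAddCommGroup E] [NormedSpace ℝ E] {g : E → ℝ}
    (hg : ContDiff ℝ 2 g) (y v w : E) :
    fderiv ℝ (fun z => fderiv ℝ g z v) y w = fderiv ℝ (fun z => fderiv ℝ g z w) y v := by
  have hd : Differentiable ℝ (fderiv ℝ g) :=
    (hg.fderiv_right (m := 1) le_rfl).differentiable one_ne_zero
  have happly : ∀ u, fderiv ℝ (fun z => fderiv ℝ g z u) y = (fderiv ℝ (fderiv ℝ g) y).flip u :=
    fun u => by simpa using fderiv_clm_apply (hd y) (differentiableAt_const u)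
  rw [happly, happly]
  exact (hg.contDiffAt.isSymmSndFDerivAt (by simp)) w v

section PartialDerivatives

variable {Lp : Type} {d : ℕ} [DecidableEq Lp] {s : Finset (Odx Lp d)} {F G : FnO Lp d}

lemma IsSmoothCO.hasDerivAt_dpart (h : IsSmoothCO F) (o : Odx Lp d) (x : Odx Lp d → ℝ) :
    HasDerivAt (fun t => F (Function.update x o t)) (Dpart o F x) (x o) := by
  obtain ⟨s, g, hg, hFg⟩ := h
  have hline : Differentiable ℝ fun t : ℝ => fun o' : ↥s => Function.update x o t o'.1 := by
    refine differentiable_pi.2 fun o' => ?_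
    by_cases ho : o'.1 = o
    · simp only [ho, Function.update_self]
      exact differentiable_id
    · simp only [Function.update_of_ne ho]
      exact differentiable_const _
  have hdiff : Differentiable ℝ fun t => F (Function.update x o t) := by
    simp only [hFg]
    exact (hg.differentiable (by simp)).comp hline
  exact (hdiff (x o)).hasDerivAt

lemma dpart_zero (o : Odx Lp d) : Dpart o (0 : FnO Lp d) = 0 :=
  funext fun _ => deriv_const _ _

lemma IsSmoothCOOn.dpart_eq_zero (h : IsSmoothCOOn s F) {o : Odx Lp d} (ho : o ∉ s) :
    Dpart o F = 0 := by
  obtain ⟨g, -, hFg⟩ := h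
  funext x
  have hconst : (fun t => F (Function.update x o t)) = fun _ => F x := by
    funext t
    rw [hFg, hFg]
    exact congrArg g (Function.update_comp_eq_of_forall_ne' x (f := Subtype.val) t
      fun o' h' => ho (h' ▸ o'.2))
  show deriv (fun t => F (Function.update x o t)) (x o) = 0
  rw [hconst, deriv_const]

lemma dpart_apply_eq_fderiv {g : (↥s → ℝ) → ℝ} (hg : ContDiff ℝ (⊤ : ℕ∞) g)
    (hFg : ∀ x, F x = g fun o => x o.1) {o : Odx Lp d} (ho : o ∈ s) (x : Odx Lp d → ℝ) :
    Dpart o F x = fderiv ℝ g (fun o' : ↥s => x o'.1) (Pi.single ⟨o, ho⟩ 1) := by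
  set y : ↥s → ℝ := fun o' => x o'.1
  have hline : (fun t => F (Function.update x o t)) =
      fun t => g (Function.update y ⟨o, ho⟩ t) := by
    funext t
    rw [hFg]
    exact congrArg g (Function.update_comp_eq_of_injective' x Subtype.val_injective ⟨o, ho⟩ t)
  have hg' : HasFDerivAt g (fderiv ℝ g y) (Function.update y ⟨o, ho⟩ (x o)) := by
    rw [Function.update_eq_self]
    exact (hg.differentiable (by simp) y).hasFDerivAt
  show deriv (fun t => F (Function.update x o t)) (x o) = _
  rw [hline]
  exact (hg'.comp_hasDerivAt (x o) (hasDerivAt_update y ⟨o, ho⟩ (x o))).deriv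

lemma contDiff_fderiv_apply {E : Type*} [NormedAddCommGroup E] [NormedSpace ℝ E] {g : E → ℝ}
    (hg : ContDiff ℝ (⊤ : ℕ∞) g) (v : E) : ContDiff ℝ (⊤ : ℕ∞) fun y => fderiv ℝ g y v :=
  (hg.fderiv_right (by exact_mod_cast le_top)).clm_apply contDiff_const

lemma IsSmoothCOOn.dpart (h : IsSmoothCOOn s F) (o : Odx Lp d) : IsSmoothCOOn s (Dpart o F) := by
  by_cases ho : o ∈ s
  · obtain ⟨g, hg, hFg⟩ := h
    exact ⟨_, contDiff_fderiv_apply hg _, dpart_apply_eq_fderiv hg hFg ho⟩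
  · rw [h.dpart_eq_zero ho]
    exact isSmoothCOOn_const s 0

lemma IsSmoothCO.dpart (h : IsSmoothCO F) (o : Odx Lp d) : IsSmoothCO (Dpart o F) := by
  obtain ⟨s, hs⟩ := isSmoothCO_iff.1 h
  exact (hs.dpart o).isSmoothCO

lemma IsSmoothCOOn.dpart_comm (h : IsSmoothCOOn s F) (o o' : Odx Lp d) :
    Dpart o' (Dpart o F) = Dpart o (Dpart o' F) := by
  by_cases ho : o ∈ s
  · by_cases ho' : o' ∈ s
    · obtain ⟨g, hg, hFg⟩ := h
      funext x
      rw [dpart_apply_eq_fderiv (contDiff_fderiv_apply hg _) (dpart_apply_eq_fderiv hg hFg ho) ho',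
        dpart_apply_eq_fderiv (contDiff_fderiv_apply hg _) (dpart_apply_eq_fderiv hg hFg ho') ho]
      exact fderiv_fderiv_apply_comm (hg.of_le (WithTop.coe_le_coe.2 le_top)) _ _ _
    · rw [(h.dpart o).dpart_eq_zero ho', h.dpart_eq_zero ho', dpart_zero]
  · rw [h.dpart_eq_zero ho, dpart_zero, (h.dpart o').dpart_eq_zero ho]

lemma dpart_add (hF : IsSmoothCO F) (hG : IsSmoothCO G) (o : Odx Lp d) :
    Dpart o (fun x => F x + G x) = fun x => Dpart o F x + Dpart o G x :=
  funext fun x => ((hF.hasDerivAt_dpart o x).add (hG.hasDerivAt_dpart o x)).deriv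

lemma dpart_mul (hF : IsSmoothCO F) (hG : IsSmoothCO G) (o : Odx Lp d) :
    Dpart o (fun x => F x * G x) = fun x => Dpart o F x * G x + F x * Dpart o G x := by
  funext x
  have h := (hF.hasDerivAt_dpart o x).mul (hG.hasDerivAt_dpart o x)
  rw [Function.update_eq_self] at h
  exact h.deriv

lemma IsSmoothCO.dlist (h : IsSmoothCO F) (L : List (Odx Lp d)) : IsSmoothCO (Dlist L F) := by
  induction L with
  | nil => exact h
  | cons o L ih => exact ih.dpart o

end PartialDerivatives

section Derivations

variable {Lp : Type} {d : ℕ} [DecidableEq Lp] {s : Finset (Odx Lp d)} {F G : FnO Lp d}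

lemma IsSmoothCOOn.pderivO_eq (h : IsSmoothCOOn s F) (i : Fin (d+1)) :
    pderivO i F = fun x => ∑ o ∈ s, x (o.1, o.2 + munit i) * Dpart o F x := by
  funext x
  refine finsum_eq_finsetSum_of_support_subset _ fun o ho => ?_
  by_contra hos
  exact ho (by simp [h.dpart_eq_zero hos])

lemma pderivO_const (i : Fin (d+1)) (c : ℝ) :
    pderivO i (fun _ : Odx Lp d → ℝ => c) = fun _ => 0 := by
  simpa using (isSmoothCOOn_const ∅ c).pderivO_eq i

lemma pderivO_coord (o : Odx Lp d) (i : Fin (d+1)) :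
    pderivO i (fun x => x o) = fun x => x (o.1, o.2 + munit i) := by
  rw [(isSmoothCOOn_coord o).pderivO_eq i]
  funext x
  have hD : Dpart o (fun x => x o) x = 1 := by
    show deriv (fun t => Function.update x o t o) (x o) = 1
    simp
  rw [sum_singleton, hD, mul_one]

lemma isSmoothCO_pderivO (h : IsSmoothCO F) (i : Fin (d+1)) : IsSmoothCO (pderivO i F) := by
  obtain ⟨s, hs⟩ := isSmoothCO_iff.1 h
  rw [hs.pderivO_eq i]
  exact isSmoothCO_sum s fun o _ => (isSmoothCO_coord _).mul (hs.dpart o).isSmoothCO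

lemma pderivO_add (hF : IsSmoothCO F) (hG : IsSmoothCO G) (i : Fin (d+1)) :
    pderivO i (fun x => F x + G x) = fun x => pderivO i F x + pderivO i G x := by
  obtain ⟨s, hFs, hGs⟩ := hF.exists_isSmoothCOOn hG
  rw [(hFs.add hGs).pderivO_eq, hFs.pderivO_eq, hGs.pderivO_eq]
  funext x
  simp only [dpart_add hF hG, mul_add, sum_add_distrib]

lemma pderivO_mul (hF : IsSmoothCO F) (hG : IsSmoothCO G) (i : Fin (d+1)) :
    pderivO i (fun x => F x * G x) = fun x => pderivO i F x * G x + F x * pderivO i G x := by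
  obtain ⟨s, hFs, hGs⟩ := hF.exists_isSmoothCOOn hG
  rw [(hFs.mul hGs).pderivO_eq, hFs.pderivO_eq, hGs.pderivO_eq]
  funext x
  simp only [dpart_mul hF hG, sum_mul, mul_sum, ← sum_add_distrib]
  exact sum_congr rfl fun o _ => by ring

lemma pderivO_sum {ι : Type*} (u : Finset ι) {f : ι → FnO Lp d}
    (h : ∀ j ∈ u, IsSmoothCO (f j)) (i : Fin (d+1)) :
    pderivO i (fun x => ∑ j ∈ u, f j x) = fun x => ∑ j ∈ u, pderivO i (f j) x := by
  induction u using Finset.induction_on with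
  | empty => simpa using pderivO_const i 0
  | insert a u ha ih =>
    have hu : ∀ j ∈ u, IsSmoothCO (f j) := fun j hj => h j (mem_insert_of_mem hj)
    simp only [sum_insert ha]
    rw [pderivO_add (h a (mem_insert_self a u)) (isSmoothCO_sum u hu) i, ih hu]

lemma pderivO_prod {ι : Type*} [DecidableEq ι] (u : Finset ι) {f : ι → FnO Lp d}
    (h : ∀ j ∈ u, IsSmoothCO (f j)) (i : Fin (d+1)) :
    pderivO i (fun x => ∏ j ∈ u, f j x) =
      fun x => ∑ j ∈ u, pderivO i (f j) x * ∏ j' ∈ u.erase j, f j' x := by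
  induction u using Finset.induction_on with
  | empty => simpa using pderivO_const i 1
  | insert a u ha ih =>
    have hu : ∀ j ∈ u, IsSmoothCO (f j) := fun j hj => h j (mem_insert_of_mem hj)
    simp only [prod_insert ha]
    rw [pderivO_mul (h a (mem_insert_self a u)) (isSmoothCO_prod u hu) i, ih hu]
    funext x
    rw [sum_insert ha, erase_insert ha, mul_sum]
    congr 1
    refine sum_congr rfl fun j hj => ?_
    rw [erase_insert_of_ne (ne_of_mem_of_not_mem hj ha).symm,
      prod_insert fun ha' => ha (mem_of_mem_erase ha')]
    ring

lemma IsSmoothCOOn.pderivO_pderivO (h : IsSmoothCOOn s F) (i j : Fin (d+1)) :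
    pderivO i (pderivO j F) = fun x => ∑ o ∈ s,
      (x (o.1, o.2 + munit j + munit i) * Dpart o F x +
        ∑ o' ∈ s, x (o.1, o.2 + munit j) * x (o'.1, o'.2 + munit i) * Dpart o' (Dpart o F) x) := by
  have hterm : ∀ o ∈ s, IsSmoothCO fun x => x (o.1, o.2 + munit j) * Dpart o F x :=
    fun o _ => (isSmoothCO_coord _).mul (h.dpart o).isSmoothCO
  rw [h.pderivO_eq j, pderivO_sum s hterm i]
  funext x
  refine sum_congr rfl fun o _ => ?_
  rw [pderivO_mul (isSmoothCO_coord _) (h.dpart o).isSmoothCO, pderivO_coord,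
    (h.dpart o).pderivO_eq]
  simp only [mul_sum, mul_assoc]

lemma IsSmoothCO.pderivO_comm (h : IsSmoothCO F) (i j : Fin (d+1)) :
    pderivO i (pderivO j F) = pderivO j (pderivO i F) := by
  obtain ⟨s, hs⟩ := isSmoothCO_iff.1 h
  rw [hs.pderivO_pderivO, hs.pderivO_pderivO]
  funext x
  simp only [sum_add_distrib, add_right_comm _ (munit j) (munit i)]
  congr 1
  rw [sum_comm]
  refine sum_congr rfl fun o _ => sum_congr rfl fun o' _ => ?_
  rw [hs.dpart_comm o' o]
  ring

lemma IsSmoothCO.iterate_pderivO (h : IsSmoothCO F) (j : Fin (d+1)) (n : ℕ) :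
    IsSmoothCO ((pderivO j)^[n] F) := by
  induction n with
  | zero => exact h
  | succ n ih =>
    rw [Function.iterate_succ_apply']
    exact isSmoothCO_pderivO ih j

lemma IsSmoothCO.pderivO_iterate_comm (h : IsSmoothCO F) (i j : Fin (d+1)) (n : ℕ) :
    pderivO i ((pderivO j)^[n] F) = (pderivO j)^[n] (pderivO i F) := by
  induction n with
  | zero => rfl
  | succ n ih =>
    rw [Function.iterate_succ_apply', Function.iterate_succ_apply',
      (h.iterate_pderivO j n).pderivO_comm, ih]

lemma IsSmoothCO.foldr_iterate_pderivO (h : IsSmoothCO F) (k : MIdx d) (ℓ : List (Fin (d+1))) :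
    IsSmoothCO (ℓ.foldr (fun j G => (pderivO j)^[k j] G) F) := by
  induction ℓ with
  | nil => exact h
  | cons a ℓ ih => exact ih.iterate_pderivO a (k a)

lemma IsSmoothCO.pderivO_foldr_iterate (h : IsSmoothCO F) (k : MIdx d) {i : Fin (d+1)}
    {ℓ : List (Fin (d+1))} (hi : i ∈ ℓ) (hℓ : ℓ.Nodup) :
    pderivO i (ℓ.foldr (fun j G => (pderivO j)^[k j] G) F) =
      ℓ.foldr (fun j G => (pderivO j)^[(k + munit i) j] G) F := by
  induction ℓ with
  | nil => cases hi
  | cons a ℓ ih =>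
    obtain ⟨haℓ, hℓ⟩ := List.nodup_cons.1 hℓ
    simp only [List.foldr_cons]
    rcases List.mem_cons.1 hi with rfl | hi
    · have hrest : ℓ.foldr (fun j G => (pderivO j)^[(k + munit i) j] G) F =
          ℓ.foldr (fun j G => (pderivO j)^[k j] G) F :=
        List.foldr_ext _ _ F fun j hj _ => by
          simp [munit, ne_of_mem_of_not_mem hj haℓ]
      rw [hrest, ← Function.iterate_succ_apply' (pderivO i)]
      simp [munit]
    · rw [(h.foldr_iterate_pderivO k ℓ).pderivO_iterate_comm, ih hi hℓ]
      simp [munit, Pi.single_apply, ne_of_mem_of_not_mem hi haℓ]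

lemma isSmoothCO_mpderiv (h : IsSmoothCO F) (k : MIdx d) : IsSmoothCO (mpderiv k F) :=
  h.foldr_iterate_pderivO k _

lemma IsSmoothCO.pderivO_mpderiv (h : IsSmoothCO F) (i : Fin (d+1)) (k : MIdx d) :
    pderivO i (mpderiv k F) = mpderiv (k + munit i) F :=
  h.pderivO_foldr_iterate k (List.mem_finRange i) (List.nodup_finRange _)

end Derivations

lemma prod_set_eq_mul_prod_erase {β M : Type*} [CommMonoid M] (L : List β) (j : Fin L.length)
    (a : β) (g : β → M) :
    ∏ j' : Fin (L.set j a).length, g ((L.set j a).get j') =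
      g a * ∏ j' ∈ univ.erase j, g (L.get j') := by
  rw [Fintype.prod_equiv (finCongr List.length_set) _
    (Function.update (fun j' => g (L.get j')) j (g a)) fun j' => ?_,
    prod_update_of_mem (mem_univ j), sdiff_singleton_eq_erase]
  simp only [List.get_eq_getElem, List.getElem_set, finCongr_apply, Fin.val_cast,
    Function.update_apply, Fin.ext_iff, eq_comm]
  split_ifs <;> rfl

section Trees

variable {Lp Dr : Type} {d : ℕ} [DecidableEq Lp] {Om Op : Set (Odx Lp d)}
  {F : Lp → Dr → FnO Lp d} {S : TreeV Lp Dr d} {Ups : Lp → S.V → FnO Lp d}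

lemma isSmoothCO_ups (hF : ∀ t l, IsP Om Op (F t l)) (hUps : S.UpsSpec F Ups) (τ : S.V)
    (t : Lp) : IsSmoothCO (Ups t τ) := by
  refine S.ind (fun τ => ∀ t, IsSmoothCO (Ups t τ)) (fun l k M ih t => ?_) τ t
  obtain ⟨L, rfl⟩ : ∃ L : List (Odx Lp d × S.V), (L : Multiset _) = M := ⟨M.toList, M.coe_toList⟩
  rw [hUps t l k L]
  exact (isSmoothCO_prod _ fun j _ => ih _ (Multiset.mem_coe.2 (L.get_mem j)) _).mul
    (isSmoothCO_mpderiv ((hF t l).isSmoothCO.dlist _) k)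

lemma ups_node_set (hUps : S.UpsSpec F Ups) (t : Lp) (l : Dr) (k : MIdx d)
    (L : List (Odx Lp d × S.V)) (j : Fin L.length) (τ' : S.V) (x : Odx Lp d → ℝ) :
    Ups t (S.node l k ↑(L.set j ((L.get j).1, τ'))) x =
      Ups (L.get j).1.1 τ' x * ((∏ j' ∈ univ.erase j, Ups (L.get j').1.1 (L.get j').2 x) *
        mpderiv k (Dlist (L.map Prod.fst) (F t l)) x) := by
  have hfst : (L.set j ((L.get j).1, τ')).map Prod.fst = L.map Prod.fst := by
    simpa [List.map_set] using List.set_getElem_self (as := L.map Prod.fst) (i := j) (by simp)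
  rw [hUps]
  dsimp only
  rw [hfst, prod_set_eq_mul_prod_erase L j _ fun b => Ups b.1.1 b.2 x, mul_assoc]

lemma linearCombination_ups_replace (hUps : S.UpsSpec F Ups) (t : Lp) (l : Dr) (k : MIdx d)
    (L : List (Odx Lp d × S.V)) (j : Fin L.length) (w : S.V →₀ ℝ) (x : Odx Lp d → ℝ) :
    Finsupp.linearCombination ℝ (fun τ => Ups t τ x) (S.replace l k L j w) =
      Finsupp.linearCombination ℝ (fun τ => Ups (L.get j).1.1 τ x) w *
        ((∏ j' ∈ univ.erase j, Ups (L.get j').1.1 (L.get j').2 x) *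
          mpderiv k (Dlist (L.map Prod.fst) (F t l)) x) := by
  rw [TreeV.replace, map_finsuppSum, Finsupp.linearCombination_apply, Finsupp.sum_mul]
  refine Finsupp.sum_congr fun τ' _ => ?_
  rw [Finsupp.linearCombination_single, smul_eq_mul, smul_eq_mul, ups_node_set hUps, mul_assoc]

variable {raiseV : Fin (d+1) → S.V → (S.V →₀ ℝ)}

lemma pderivO_ups_node (hF : ∀ t l, IsP Om Op (F t l)) (hUps : S.UpsSpec F Ups)
    (hraiseV : S.RaiseSpec raiseV) (i : Fin (d+1)) (l : Dr) (k : MIdx d)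
    (L : List (Odx Lp d × S.V))
    (ih : ∀ b ∈ L, ∀ t, pderivO i (Ups t b.2) =
      fun x => Finsupp.linearCombination ℝ (fun τ => Ups t τ x) (raiseV i b.2)) (t : Lp) :
    pderivO i (Ups t (S.node l k ↑L)) =
      fun x => Finsupp.linearCombination ℝ (fun τ => Ups t τ x) (raiseV i (S.node l k ↑L)) := by
  have hbranch : ∀ j ∈ (univ : Finset (Fin L.length)),
      IsSmoothCO (Ups (L.get j).1.1 (L.get j).2) := fun j _ => isSmoothCO_ups hF hUps _ _
  have hroot : IsSmoothCO (Dlist (L.map Prod.fst) (F t l)) := (hF t l).isSmoothCO.dlist _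
  rw [hUps t l k L, hraiseV i l k L, pderivO_mul (isSmoothCO_prod _ hbranch)
    (isSmoothCO_mpderiv hroot k), pderivO_prod _ hbranch, hroot.pderivO_mpderiv]
  funext x
  rw [map_add, map_sum, Finsupp.linearCombination_single, one_smul, hUps t l (k + munit i) L,
    add_comm, sum_mul]
  congr 1
  refine sum_congr rfl fun j _ => ?_
  rw [linearCombination_ups_replace hUps, ← congrFun (ih (L.get j) (L.get_mem j) _) x, mul_assoc]

lemma pderivO_ups (hF : ∀ t l, IsP Om Op (F t l)) (hUps : S.UpsSpec F Ups)
    (hraiseV : S.RaiseSpec raiseV) (i : Fin (d+1)) (τ : S.V) (t : Lp) :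
    pderivO i (Ups t τ) =
      fun x => Finsupp.linearCombination ℝ (fun τ' => Ups t τ' x) (raiseV i τ) := by
  refine S.ind (fun τ => ∀ t, pderivO i (Ups t τ) =
    fun x => Finsupp.linearCombination ℝ (fun τ' => Ups t τ' x) (raiseV i τ))
    (fun l k M ih t => ?_) τ t
  obtain ⟨L, rfl⟩ : ∃ L : List (Odx Lp d × S.V), (L : Multiset _) = M := ⟨M.toList, M.coe_toList⟩
  exact pderivO_ups_node hF hUps hraiseV i l k L (fun b hb => ih b (Multiset.mem_coe.2 hb)) t

end Trees

theorem statement9_general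
    {d : ℕ} {Lp Dr : Type} [DecidableEq Lp]
    (Om Op : Set (Odx Lp d))
    (F : Lp → Dr → FnO Lp d) (hF : ∀ t l, IsP Om Op (F t l))
    (S : TreeV Lp Dr d)
    (Ups : Lp → S.V → FnO Lp d) (hUps : S.UpsSpec F Ups)
    (raiseV : Fin (d+1) → S.V → (S.V →₀ ℝ)) (hraiseV : S.RaiseSpec raiseV) :
    ∀ (i : Fin (d+1)) (τ : S.V) (t : Lp),
      pderivO i (Ups t τ) = fun x => (raiseV i τ).sum fun τ'' c => c * Ups t τ'' x := by
  intro i τ t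
  rw [pderivO_ups hF hUps hraiseV i τ t]
  simp only [Finsupp.linearCombination_apply, smul_eq_mul]

/-- Corollary `cor:graftMorphismSmall`, second identity: the raising
morphism property of `Υ`: `∂_i Υ^F[τ] = Υ^F[↑̂_i τ]` componentwise, where `Υ^F` is
extended linearly. -/
theorem statement9
    {d : ℕ} {Lp Dr : Type} [Fintype Lp] [DecidableEq Lp]
    (Om Op : Set (Odx Lp d))
    (hdisj : ∀ o, ¬(o ∈ Om ∧ o ∈ Op)) (hcover : ∀ o, o ∈ Om ∨ o ∈ Op)
    (F : Lp → Dr → FnO Lp d) (hF : ∀ t l, IsP Om Op (F t l))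
    (S : TreeV Lp Dr d)
    (Ups : Lp → S.V → FnO Lp d) (hUps : S.UpsSpec F Ups)
    (raiseV : Fin (d+1) → S.V → (S.V →₀ ℝ)) (hraiseV : S.RaiseSpec raiseV) :
    ∀ (i : Fin (d+1)) (τ : S.V) (t : Lp),
      pderivO i (Ups t τ) = fun x => (raiseV i τ).sum fun τ'' c => c * Ups t τ'' x :=
  statement9_general Om Op F hF S Ups hUps raiseV hraiseV

end SPDERenorm
end

section
/- Functoriality of the decorated-tree inner product construction with respect to adjoints (Lemma 'lem: adjoint identity'): Let 𝖭 and 𝖭' be node-species sets equipped with real inner products on the free vector spaces ⟨𝖭⟩ and ⟨𝖭'⟩, let 𝖤 be a set of edge species, and let A: ⟨𝖭⟩ → ⟨𝖭'⟩ be a linear map admitting an adjoint A*: ⟨𝖭'⟩ → ⟨𝖭⟩, i.e. ⟨A Y, Y'⟩ = ⟨Y, A* Y'⟩ for all Y ∈ 𝖭 and Y' ∈ 𝖭'. Then 𝔗(A*) is the adjoint of 𝔗(A): for all trees τ ∈ 𝒯(𝖭,𝖤) and σ ∈ 𝒯(𝖭',𝖤) one has ⟨𝔗(A) τ, σ⟩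 = ⟨τ, 𝔗(A*) σ⟩. -/
/-
Common framework: multi-indices, the algebra of smooth functions on ℝ^𝒪,
and the spaces of decorated trees 𝒱 and 𝔅 of [Bruned–Chandra–Chevyrev–Hairer,
"Renormalising SPDEs in regularity structures"], presented abstractly together
with the defining recursions of the various operators on them.
-/

open scoped BigOperators Classical

namespace SPDERenorm

/-!
Induction on `τ`. Write `τ = Y ∏ Iⱼ(τⱼ)` and `σ = Y' ∏ I'ₖ(σₖ)`. Expanding `𝔗(A)τ`
multilinearly in its branches produces a sum, over choices of one tree from each `𝔗(A)τⱼ`,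
of trees whose inner product with `σ` is a sum over matchings `s` of the branches. Exchanging
the two sums and collapsing the product of sums gives
`⟨𝔗(A)τ, σ⟩ = ⟨AY, Y'⟩ · ∑ₛ ∏ⱼ [Iⱼ = I'ₛⱼ] ⟨𝔗(A)τⱼ, σₛⱼ⟩`,
and symmetrically for `⟨τ, 𝔗(A*)σ⟩`. The root factors agree by adjointness, the branch factors
by the induction hypothesis, and a matching of one side is the inverse of one of the other.
-/

section EquivSum

variable {R : Type*} [CommSemiring R] {α α' β : Type*} [Fintype α] [DecidableEq α]
  [Fintype α'] [DecidableEq α'] [Fintype β] [DecidableEq β]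

theorem sum_prod_equiv_symm {F : (α ≃ β) → α → R} {G : (β ≃ α) → β → R}
    (h : ∀ s a, F s a = G s.symm (s a)) :
    ∑ s : α ≃ β, ∏ a, F s a = ∑ t : β ≃ α, ∏ b, G t b :=
  Fintype.sum_equiv (Equiv.symmEquiv α β) _ _ fun s => Fintype.prod_equiv s _ _ (h s)

theorem sum_prod_equiv_congr_left (e : α ≃ α') {F : (α ≃ β) → α → R}
    {G : (α' ≃ β) → α' → R} (h : ∀ s a, F s a = G (e.symm.trans s) (e a)) :
    ∑ s : α ≃ β, ∏ a, F s a = ∑ s : α' ≃ β, ∏ a', G s a' :=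
  Fintype.sum_equiv (e.equivCongr (Equiv.refl β)) _ _ fun s =>
    Fintype.prod_equiv e _ _ (h s)

end EquivSum

noncomputable def pairing {α β : Type*} (ip : α → β → ℝ) (w : α →₀ ℝ) (b : β) : ℝ :=
  w.sum fun a c => c * ip a b

theorem pairing_eq_linearCombination {α β : Type*} (ip : α → β → ℝ) (w : α →₀ ℝ) (b : β) :
    pairing ip w b = Finsupp.linearCombination ℝ (fun a => ip a b) w :=
  (Finsupp.linearCombination_apply ℝ w).symm

namespace GTree

variable {N N' E : Type}

theorem sum_expandAux_cons (S : GTree N E) (e : E) (w : S.T →₀ ℝ)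
    (W : List (E × (S.T →₀ ℝ))) (F : Multiset (E × S.T) → ℝ) :
    ((S.expandAux ((e, w) :: W)).sum fun M c => c * F M) =
      w.sum fun τ c => c * (S.expandAux W).sum fun M c' => c' * F ((e, τ) ::ₘ M) := by
  simp only [expandAux]
  rw [Finsupp.sum_sum_index (fun _ => zero_mul _) fun _ _ _ => add_mul _ _ _]
  refine Finsupp.sum_congr fun τ _ => ?_
  rw [Finsupp.sum_sum_index (fun _ => zero_mul _) fun _ _ _ => add_mul _ _ _, Finsupp.mul_sum]
  refine Finsupp.sum_congr fun M _ => ?_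
  rw [Finsupp.sum_single_index (zero_mul _), mul_assoc]

theorem sum_expandAux (S : GTree N E) (W : List (E × (S.T →₀ ℝ)))
    (F : Multiset (E × S.T) → ℝ) :
    ((S.expandAux W).sum fun M c => c * F M) =
      ∑ x ∈ Fintype.piFinset fun j => (W.get j).2.support,
        (∏ j, (W.get j).2 (x j)) * F ↑(List.ofFn fun j => ((W.get j).1, x j)) := by
  induction W generalizing F with
  | nil => simp [expandAux]
  | cons ew W ih =>
    obtain ⟨e, w⟩ := ew
    have hsplit := Finset.filter_piFinset_eq_map_consEquiv
      (fun j => (((e, w) :: W).get j).2.support) (fun _ => True)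
    simp only [Finset.filter_true] at hsplit
    -- `Fin ((e, w) :: W).length` is `Fin (W.length + 1)` only up to unfolding
    erw [hsplit]
    rw [Finset.sum_map, Finset.sum_product, sum_expandAux_cons]
    refine Finset.sum_congr rfl fun τ _ => ?_
    dsimp only
    rw [ih fun M => F ((e, τ) ::ₘ M), Finset.mul_sum]
    refine Finset.sum_congr rfl fun x _ => ?_
    erw [Fin.prod_univ_succ]
    simp [List.ofFn_succ, mul_assoc]

theorem sum_expandAux_mul_ip {S : GTree N E} {ipN : N → N → ℝ} {ip : S.T → S.T → ℝ}
    (hip : S.IPSpec ipN ip) (Z Y : N) (W : List (E × (S.T →₀ ℝ))) (L : List (E × S.T)) :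
    ((S.expandAux W).sum fun M c => c * ip (S.node Z M) (S.node Y ↑L)) =
      ipN Z Y * ∑ s : Fin W.length ≃ Fin L.length, ∏ j,
        if (W.get j).1 = (L.get (s j)).1 then pairing ip (W.get j).2 (L.get (s j)).2 else 0 := by
  set φ : Fin W.length → S.T → Fin L.length → ℝ := fun j τ k =>
    if (W.get j).1 = (L.get k).1 then ip τ (L.get k).2 else 0
  have hnode (x : Fin W.length → S.T) :
      ip (S.node Z ↑(List.ofFn fun j => ((W.get j).1, x j))) (S.node Y ↑L) =
        ipN Z Y * ∑ s : Fin W.length ≃ Fin L.length, ∏ j, φ j (x j) (s j) := by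
    rw [hip]
    congr 1
    exact sum_prod_equiv_congr_left (finCongr List.length_ofFn) fun s j => by simp [φ]; rfl
  have hrow (j : Fin W.length) (k : Fin L.length) :
      ∑ τ ∈ (W.get j).2.support, (W.get j).2 τ * φ j τ k =
        if (W.get j).1 = (L.get k).1 then pairing ip (W.get j).2 (L.get k).2 else 0 := by
    simp only [φ, pairing, Finsupp.sum]
    split_ifs <;> simp
  calc ((S.expandAux W).sum fun M c => c * ip (S.node Z M) (S.node Y ↑L))
      = ∑ x ∈ Fintype.piFinset fun j => (W.get j).2.support, (∏ j, (W.get j).2 (x j)) *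
          (ipN Z Y * ∑ s : Fin W.length ≃ Fin L.length, ∏ j, φ j (x j) (s j)) := by
        simp only [sum_expandAux, hnode]
    _ = ipN Z Y * ∑ s : Fin W.length ≃ Fin L.length,
          ∑ x ∈ Fintype.piFinset fun j => (W.get j).2.support,
            ∏ j, (W.get j).2 (x j) * φ j (x j) (s j) := by
        simp only [Finset.mul_sum, Finset.prod_mul_distrib]
        rw [Finset.sum_comm]
        refine Finset.sum_congr rfl fun s _ => Finset.sum_congr rfl fun x _ => by ring
    _ = ipN Z Y * ∑ s : Fin W.length ≃ Fin L.length,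
          ∏ j, ∑ τ ∈ (W.get j).2.support, (W.get j).2 τ * φ j τ (s j) := by
        simp only [Finset.prod_univ_sum]
    _ = _ := by simp only [hrow]

theorem MapSpec.pairing_node {S : GTree N E} {S' : GTree N' E} {A : N → (N' →₀ ℝ)}
    {TA : S.T → (S'.T →₀ ℝ)} (hTA : MapSpec S S' A TA) {ipN' : N' → N' → ℝ}
    {ip' : S'.T → S'.T → ℝ} (hip : S'.IPSpec ipN' ip') (Y : N) (L : List (E × S.T)) (Y' : N')
    (L' : List (E × S'.T)) :
    pairing ip' (TA (S.node Y ↑L)) (S'.node Y' ↑L') =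
      pairing ipN' (A Y) Y' * ∑ s : Fin L.length ≃ Fin L'.length, ∏ j,
        if (L.get j).1 = (L'.get (s j)).1 then pairing ip' (TA (L.get j).2) (L'.get (s j)).2
        else 0 := by
  set W := L.map fun x => (x.1, TA x.2)
  have hW : W.length = L.length := List.length_map _
  have hcast : (∑ s : Fin W.length ≃ Fin L'.length, ∏ j,
      if (W.get j).1 = (L'.get (s j)).1 then pairing ip' (W.get j).2 (L'.get (s j)).2 else 0) =
      ∑ s : Fin L.length ≃ Fin L'.length, ∏ j,
        if (L.get j).1 = (L'.get (s j)).1 then pairing ip' (TA (L.get j).2) (L'.get (s j)).2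
        else 0 :=
    sum_prod_equiv_congr_left (finCongr hW) fun s j => by simp [W]
  rw [hTA, pairing_eq_linearCombination]
  simp only [map_finsuppSum, Finsupp.linearCombination_single, smul_eq_mul]
  rw [← hcast, pairing, Finsupp.sum_mul]
  refine Finsupp.sum_congr fun Z _ => ?_
  rw [mul_assoc, ← sum_expandAux_mul_ip hip, Finsupp.mul_sum]
  exact Finsupp.sum_congr fun M _ => mul_assoc _ _ _

theorem IPSpec.flip {S : GTree N E} {ipN : N → N → ℝ} {ip : S.T → S.T → ℝ}
    (h : S.IPSpec ipN ip) : S.IPSpec (flip ipN) (flip ip) := by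
  intro Y Y' L L'
  simp only [_root_.flip]
  rw [h]
  congr 1
  exact sum_prod_equiv_symm fun s j => by simp [eq_comm]

end GTree

/-- Lemma `lem: adjoint identity`: functoriality of the decorated-tree
inner product construction with respect to adjoints: if `A* ` is the adjoint of `A` on
node species, then `𝔗(A*)` is the adjoint of `𝔗(A)`: `⟨𝔗(A)τ, σ⟩ = ⟨τ, 𝔗(A*)σ⟩`. -/
theorem statement13
    {N N' E : Type}
    (S : GTree N E) (S' : GTree N' E)
    (ipN : N → N → ℝ) (ipN' : N' → N' → ℝ)
    (ipT : S.T → S.T → ℝ) (hipT : S.IPSpec ipN ipT)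
    (ipT' : S'.T → S'.T → ℝ) (hipT' : S'.IPSpec ipN' ipT')
    (A : N → (N' →₀ ℝ)) (Astar : N' → (N →₀ ℝ))
    (hadj : ∀ (Y : N) (Y' : N'),
      ((A Y).sum fun Z c => c * ipN' Z Y') = (Astar Y').sum fun Z c => c * ipN Y Z)
    (TA : S.T → (S'.T →₀ ℝ)) (hTA : GTree.MapSpec S S' A TA)
    (TAstar : S'.T → (S.T →₀ ℝ)) (hTAstar : GTree.MapSpec S' S Astar TAstar) :
    ∀ (τ : S.T) (σ : S'.T),
      ((TA τ).sum fun τ' c => c * ipT' τ' σ) =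
        (TAstar σ).sum fun σ' c => c * ipT τ σ' := by
  intro τ
  induction τ using S.ind with
  | _ Y M ih =>
    intro σ
    obtain ⟨L, rfl⟩ : ∃ L : List (E × S.T), M = ↑L := ⟨M.toList, (Multiset.coe_toList M).symm⟩
    obtain ⟨⟨Y', M'⟩, rfl⟩ := S'.node_bij.surjective σ
    obtain ⟨L', rfl⟩ : ∃ L' : List (E × S'.T), M' = ↑L' :=
      ⟨M'.toList, (Multiset.coe_toList M').symm⟩
    change pairing ipT' (TA (S.node Y ↑L)) (S'.node Y' ↑L') =
      pairing (flip ipT) (TAstar (S'.node Y' ↑L')) (S.node Y ↑L)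
    have ih' (j : Fin L.length) (σ : S'.T) :
        pairing ipT' (TA (L.get j).2) σ = pairing (flip ipT) (TAstar σ) (L.get j).2 :=
      ih _ (List.get_mem L j) σ
    rw [hTA.pairing_node hipT', hTAstar.pairing_node hipT.flip]
    congr 1
    · exact hadj Y Y'
    refine sum_prod_equiv_symm fun s j => ?_
    rw [ih']
    simp [eq_comm]

end SPDERenorm
end
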